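/- Suppose the integer k ≥ 0 satisfies ν := k − n/2 + 1 ≤ −3/2 (equivalently 2k ≤ n − 5). Then the consecutive-generation ratio diverges quadratically at the origin: z² · γ_k(z) → 2(k+1)(n − 2k − 4)/B as z → 0⁺; that is, γ_k(z) ∼ 4(ν + n/2)(−ν − 1)/(Bz²) since ν + n/2 = k+1 and −ν−1 = (n − 2k − 4)/2. -/

import Mathlib

open Real MeasureTheory Set Filter Topology

/-- The steady-state generation-`k` density in the normalized distance
`z = |x|√(λ/D)` from the origin:
`𝒜_k(z) = (μ(λB)^k/(k!(4πD)^{n/2})) ∫₀^∞ s^{k−n/2} exp(−λs − z²/(4λs)) ds`. -/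
noncomputable def steadyDensity (n : ℕ) (lam D B mu : ℝ) (k : ℕ) (z : ℝ) : ℝ :=
  (mu * (lam * B) ^ k / ((Nat.factorial k : ℝ) * (4 * π * D) ^ ((n : ℝ) / 2))) *
    ∫ s in Set.Ioi (0:ℝ),
      s ^ ((k : ℝ) - (n : ℝ) / 2) * Real.exp (-lam * s - z ^ 2 / (4 * lam * s))

/-- The consecutive-generation ratio `γ_k(z) = 𝒜_k(z)/𝒜_{k+1}(z)`. -/
noncomputable def genRatio (n : ℕ) (lam D B mu : ℝ) (k : ℕ) (z : ℝ) : ℝ :=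
  steadyDensity n lam D B mu k z / steadyDensity n lam D B mu (k + 1) z

/-!
The substitution `s = z² / (4λt)` turns the integral defining `𝒜_k(z)` into
`(z²/(4λ))^ν · F_b(z)`, where `F_b(z) = ∫₀^∞ t^b exp(−t − z²/(4t)) dt` and `b = −ν − 1`.
Passing from `k` to `k + 1` raises `ν` by one and lowers `b` by one, so
`z² γ_k(z) = (4(k+1)/B) · F_b(z) / F_{b−1}(z)` exactly. When `b > 0`, dominated convergence gives
`F_b(z) → Γ(b+1)` and `F_{b−1}(z) → Γ(b)` as `z → 0`, and `Γ(b+1)/Γ(b) = b = (n − 2k − 4)/2`.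
-/

theorem integral_comp_div_Ioi {E : Type*} [NormedAddCommGroup E] [NormedSpace ℝ E]
    (g : ℝ → E) {C : ℝ} (hC : 0 < C) :
    ∫ t in Ioi (0:ℝ), (C / t ^ 2) • g (C / t) = ∫ s in Ioi 0, g s := by
  have hscale := integral_comp_mul_left_Ioi' g 0 hC
  rw [mul_zero] at hscale
  rw [← hscale, ← integral_comp_rpow_Ioi (fun x => g (C * x)) (p := -1) (by norm_num),
    ← integral_smul]
  refine setIntegral_congr_fun measurableSet_Ioi fun t _ => ?_
  rw [smul_smul, rpow_neg_one, ← div_eq_mul_inv]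
  norm_num [div_eq_mul_inv]

/-- `2 (z/2)^(b+1) K_{b+1}(z)`, in terms of the Macdonald function `K`. -/
noncomputable def macdonaldIntegral (b z : ℝ) : ℝ :=
  ∫ t in Ioi (0:ℝ), t ^ b * exp (-t - z ^ 2 / (4 * t))

theorem tendsto_macdonaldIntegral_zero {b : ℝ} (hb : -1 < b) :
    Tendsto (macdonaldIntegral b) (𝓝 0) (𝓝 (Gamma (b + 1))) := by
  have hGamma : Gamma (b + 1) = ∫ t in Ioi (0:ℝ), t ^ b * exp (-t - (0:ℝ) ^ 2 / (4 * t)) := by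
    rw [Gamma_eq_integral (by linarith)]
    refine setIntegral_congr_fun measurableSet_Ioi fun t _ => ?_
    rw [add_sub_cancel_right, mul_comm]
    norm_num
  rw [hGamma]
  refine continuousAt_of_dominated (bound := fun t => t ^ b * exp (-t))
    (Eventually.of_forall fun z => by fun_prop) ?_ ?_ ?_
  · refine Eventually.of_forall fun z => ?_
    filter_upwards [ae_restrict_mem measurableSet_Ioi] with t (ht : 0 < t)
    rw [norm_of_nonneg (by positivity)]
    gcongr
    have : 0 ≤ z ^ 2 / (4 * t) := by positivity
    linarith
  · refine (GammaIntegral_convergent (show 0 < b + 1 by linarith)).congr_fun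
      (fun t _ => ?_) measurableSet_Ioi
    rw [add_sub_cancel_right, mul_comm]
  · filter_upwards [ae_restrict_mem measurableSet_Ioi] with t (ht : 0 < t)
    fun_prop (disch := positivity)

theorem integral_rpow_mul_exp_eq_macdonaldIntegral {lam z : ℝ} (hlam : 0 < lam) (hz : z ≠ 0)
    (e : ℝ) :
    ∫ s in Ioi (0:ℝ), s ^ e * exp (-lam * s - z ^ 2 / (4 * lam * s)) =
      (z ^ 2 / (4 * lam)) ^ (e + 1) * macdonaldIntegral (-e - 2) z := by
  set C := z ^ 2 / (4 * lam) with hCdef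
  have hC : 0 < C := by positivity
  rw [← integral_comp_div_Ioi _ hC, macdonaldIntegral, ← integral_const_mul]
  refine setIntegral_congr_fun measurableSet_Ioi fun t (ht : 0 < t) => ?_
  have hexp : -lam * (C / t) - z ^ 2 / (4 * lam * (C / t)) = -t - z ^ 2 / (4 * t) := by
    rw [hCdef]
    field_simp
    ring
  have hpow : C / t ^ 2 * (C / t) ^ e = C ^ (e + 1) * t ^ (-e - 2) := by
    rw [div_rpow hC.le ht.le, rpow_add_one hC.ne', rpow_sub ht, rpow_neg ht.le, rpow_two]
    field_simp
  rw [smul_eq_mul, hexp, ← mul_assoc, hpow, mul_assoc]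

theorem steadyDensity_eq_macdonaldIntegral (n : ℕ) {lam : ℝ} (D B mu : ℝ) (hlam : 0 < lam)
    (k : ℕ) {z : ℝ} (hz : z ≠ 0) :
    steadyDensity n lam D B mu k z =
      mu * (lam * B) ^ k / ((Nat.factorial k : ℝ) * (4 * π * D) ^ ((n : ℝ) / 2)) *
        ((z ^ 2 / (4 * lam)) ^ ((k : ℝ) - n / 2 + 1) *
          macdonaldIntegral (n / 2 - k - 2) z) := by
  rw [steadyDensity, integral_rpow_mul_exp_eq_macdonaldIntegral hlam hz]
  ring_nf

theorem sq_mul_genRatio_eq (n : ℕ) {lam D B mu : ℝ} (hlam : 0 < lam) (hD : 0 < D)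
    (hB : B ≠ 0) (hmu : mu ≠ 0) (k : ℕ) {z : ℝ} (hz : z ≠ 0) :
    z ^ 2 * genRatio n lam D B mu k z =
      4 * (k + 1) / B * (macdonaldIntegral (n / 2 - k - 2) z /
        macdonaldIntegral (n / 2 - k - 3) z) := by
  set C := z ^ 2 / (4 * lam) with hCdef
  have hC : 0 < C := by positivity
  have hz2 : z ^ 2 = 4 * lam * C := by rw [hCdef]; field_simp
  have hpow : C ^ (((k + 1 : ℕ) : ℝ) - n / 2 + 1) = C ^ ((k : ℝ) - n / 2 + 1) * C := by
    rw [← rpow_add_one hC.ne']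
    push_cast
    ring_nf
  have hb : (n : ℝ) / 2 - ((k + 1 : ℕ) : ℝ) - 2 = n / 2 - k - 3 := by push_cast; ring
  rw [genRatio, steadyDensity_eq_macdonaldIntegral n D B mu hlam k hz,
    steadyDensity_eq_macdonaldIntegral n D B mu hlam (k + 1) hz, hpow, hb, hz2,
    Nat.factorial_succ]
  push_cast
  field_simp
  ring

theorem genRatio_quadratic_divergence_general
    (n : ℕ) (lam D B mu : ℝ)
    (hlam : 0 < lam) (hD : 0 < D) (hB : 0 < B) (hmu : 0 < mu)
    (k : ℕ) (hnu : (k : ℝ) - (n : ℝ) / 2 + 1 ≤ -(3 / 2 : ℝ)) :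
    Filter.Tendsto (fun z : ℝ => z ^ 2 * genRatio n lam D B mu k z)
      (nhdsWithin 0 (Set.Ioi 0))
      (nhds (2 * ((k : ℝ) + 1) * ((n : ℝ) - 2 * (k : ℝ) - 4) / B)) := by
  set b : ℝ := n / 2 - k - 2 with hbdef
  have hb : 0 < b := by linarith
  have hnum := tendsto_macdonaldIntegral_zero (show -1 < b by linarith)
  have hden := tendsto_macdonaldIntegral_zero (show -1 < b - 1 by linarith)
  rw [sub_add_cancel] at hden
  have hlim : Tendsto (fun z => 4 * (k + 1) / B * (macdonaldIntegral b z /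
      macdonaldIntegral (b - 1) z)) (𝓝 0) (𝓝 (4 * (k + 1) / B * (Gamma (b + 1) / Gamma b))) :=
    tendsto_const_nhds.mul (hnum.div hden (Gamma_pos_of_pos hb).ne')
  have hval : 4 * (k + 1) / B * (Gamma (b + 1) / Gamma b) =
      2 * ((k : ℝ) + 1) * ((n : ℝ) - 2 * (k : ℝ) - 4) / B := by
    rw [Gamma_add_one hb.ne', mul_div_cancel_right₀ _ (Gamma_pos_of_pos hb).ne', hbdef]
    ring
  rw [← hval]
  refine (hlim.mono_left nhdsWithin_le_nhds).congr' ?_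
  filter_upwards [self_mem_nhdsWithin] with z (hz : 0 < z)
  rw [sq_mul_genRatio_eq n hlam hD hB.ne' hmu.ne' k hz.ne',
    show (n : ℝ) / 2 - k - 3 = b - 1 by ring]

/-- If `ν = k − n/2 + 1 ≤ −3/2` (i.e. `2k ≤ n − 5`), the consecutive-generation
ratio diverges quadratically at the origin:
`z² γ_k(z) → 2(k+1)(n − 2k − 4)/B` as `z → 0⁺`. -/
theorem genRatio_quadratic_divergence
    (n : ℕ) (hn : 5 ≤ n) (lam D B mu : ℝ)
    (hlam : 0 < lam) (hD : 0 < D) (hB : 0 < B) (hmu : 0 < mu)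
    (k : ℕ) (hnu : (k : ℝ) - (n : ℝ) / 2 + 1 ≤ -(3 / 2 : ℝ)) :
    Filter.Tendsto (fun z : ℝ => z ^ 2 * genRatio n lam D B mu k z)
      (nhdsWithin 0 (Set.Ioi 0))
      (nhds (2 * ((k : ℝ) + 1) * ((n : ℝ) - 2 * (k : ℝ) - 4) / B)) :=
  genRatio_quadratic_divergence_general n lam D B mu hlam hD hB hmu k hnu
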